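/- If F is the free product of infinite cyclic groups F_1, ..., F_t (i.e., F is free of rank t with generator x_i in F_i), then γ_{c+1}(F) = B·γ_{c+2}(F), where B is the subgroup generated by all basic commutators of weight c+1 in the generators x_1, ..., x_t. -/

import Mathlib

/-- Formal commutators on `t` letters. -/
inductive FC (t : ℕ) : Type
  | of : Fin t → FC t
  | comm : FC t → FC t → FC t
deriving DecidableEq

/-- Weight of a formal commutator. -/
def FC.wt {t : ℕ} : FC t → ℕ
  | .of _ => 1
  | .comm u v => u.wt + v.wt

/-- Evaluation of a formal commutator in a group, using the convention
`[a,b] = a⁻¹b⁻¹ab`. -/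
def FC.eval {t : ℕ} {F : Type*} [Group F] (x : Fin t → F) : FC t → F
  | .of i => x i
  | .comm u v => (FC.eval x u)⁻¹ * (FC.eval x v)⁻¹ * FC.eval x u * FC.eval x v

/-- M. Hall's basic commutators, relative to a linear order on formal
commutators (assumed compatible with weight): the letters are basic, and
`[u,v]` is basic iff `u, v` are basic, `v < u`, and if `u = [u₁,u₂]` then
`u₂ ≤ v`. -/
def FC.IsBasic {t : ℕ} [LinearOrder (FC t)] : FC t → Prop
  | .of _ => True
  | .comm u v => u.IsBasic ∧ v.IsBasic ∧ v < u ∧ ∀ u₁ u₂, u = .comm u₁ u₂ → u₂ ≤ v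

/-!
Induction on `n`, the step `n + 1` being carried out in `G ⧸ γ (n + 2)`, where `γ (n + 1)` is
central. There `γ (n + 1) = ⁅γ n, G⁆` is generated by brackets `[g, h]`, and `[g, h]` is
multiplicative in each entry, so by the induction hypothesis (`γ m` is generated modulo
`γ (m + 1)` by basic commutators of weight `m + 1`) it suffices to treat `[u, v]` with `u, v`
basic of total weight `n + 2`. If `v < u` then either `[u, v]` is basic, or `u = [u₁, u₂]` with
`v < u₂`; then the Jacobi identity writes `[u, v]` through `[[u₂, v], u₁]` and `[[u₁, v], u₂]`,
which expand again into brackets of basic commutators all of whose entries exceed `v`. Since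
the order extends the weight, this descent is well founded.
-/

open Subgroup
open scoped commutatorElement

/-- `γ n` is the paper's `γ_{n+1}`: Mathlib's lower central series starts at `γ 0 = ⊤`. -/
local notation "γ" => Subgroup.lowerCentralSeries (⊤ : Subgroup _)

namespace HallBasis

section Commutators

variable {G : Type*} [Group G]

/-- The commutator in the convention `[a, b] = a⁻¹b⁻¹ab` of `FC.eval`
(Mathlib's `⁅a, b⁆` is `aba⁻¹b⁻¹`). -/
def bracket (g h : G) : G := g⁻¹ * h⁻¹ * g * h

lemma bracket_eq_commutatorElement (g h : G) : bracket g h = ⁅g⁻¹, h⁻¹⁆ := by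
  simp only [bracket, commutatorElement_def, inv_inv]

lemma inv_bracket (g h : G) : (bracket g h)⁻¹ = bracket h g := by
  simp only [bracket]; group

lemma bracket_self (g : G) : bracket g g = 1 := by
  simp only [bracket]; group

lemma bracket_one_left (h : G) : bracket 1 h = 1 := by
  simp only [bracket]; group

lemma conj_eq_self_of_mem_center {c : G} (hc : c ∈ center G) (g : G) : g⁻¹ * c * g = c := by
  rw [mem_center_iff.mp hc g⁻¹, inv_mul_cancel_right]

lemma bracket_mul_left_of_mem_center {g₁ g₂ h : G} (hc : bracket g₁ h ∈ center G) :
    bracket (g₁ * g₂) h = bracket g₁ h * bracket g₂ h := by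
  calc bracket (g₁ * g₂) h = g₂⁻¹ * bracket g₁ h * g₂ * bracket g₂ h := by
        simp only [bracket]; group
    _ = bracket g₁ h * bracket g₂ h := by rw [conj_eq_self_of_mem_center hc]

lemma bracket_inv_left_of_mem_center {g h : G} (hc : bracket g h ∈ center G) :
    bracket g⁻¹ h = (bracket g h)⁻¹ := by
  calc bracket g⁻¹ h = g * (bracket g h)⁻¹ * g⁻¹ := by simp only [bracket]; group
    _ = (bracket g h)⁻¹ := by
      simpa using conj_eq_self_of_mem_center (inv_mem hc) g⁻¹

/-- Where `g ↦ bracket g h` takes central values it is multiplicative, so its values on a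
closure are generated by its values on the generators. -/
lemma bracket_mem_of_mem_closure_left {S : Set G} {h : G} {D : Subgroup G}
    (hc : ∀ g ∈ closure S, bracket g h ∈ center G) (hS : ∀ s ∈ S, bracket s h ∈ D)
    {g : G} (hg : g ∈ closure S) : bracket g h ∈ D := by
  induction hg using closure_induction with
  | mem s hs => exact hS s hs
  | one => rw [bracket_one_left]; exact one_mem D
  | mul a b ha _ iha ihb =>
    rw [bracket_mul_left_of_mem_center (hc a ha)]; exact mul_mem iha ihb
  | inv a ha iha =>
    rw [bracket_inv_left_of_mem_center (hc a ha)]; exact inv_mem iha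

lemma hallWitt (x y z : G) :
    (y⁻¹ * bracket (bracket x y⁻¹) z * y) * (z⁻¹ * bracket (bracket y z⁻¹) x * z) *
      (x⁻¹ * bracket (bracket z x⁻¹) y * x) = 1 := by
  simp only [bracket]; group

lemma bracket_bracket_inv_right {x y z : G} (hc : bracket (bracket x y) z ∈ center G)
    (hz : bracket (bracket x y) (bracket z y) = 1) :
    bracket (bracket x y⁻¹) z = (bracket (bracket x y) z)⁻¹ := by
  set c := bracket x y
  have hcz : bracket c (z * bracket z y) = bracket c z := by
    calc bracket c (z * bracket z y)
        = bracket c (bracket z y) * ((bracket z y)⁻¹ * bracket c z * bracket z y) := by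
          simp only [bracket]; group
      _ = bracket c z := by rw [hz, one_mul, conj_eq_self_of_mem_center hc]
  calc bracket (bracket x y⁻¹) z = y * bracket c⁻¹ (z * bracket z y) * y⁻¹ := by
        simp only [c, bracket]; group
    _ = (bracket c z)⁻¹ := by
      rw [bracket_inv_left_of_mem_center (hcz ▸ hc), hcz]
      simpa using conj_eq_self_of_mem_center (inv_mem hc) y⁻¹

lemma jacobi {x y z : G}
    (hc₁ : bracket (bracket x y) z ∈ center G) (hc₂ : bracket (bracket y z) x ∈ center G)
    (hc₃ : bracket (bracket z x) y ∈ center G)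
    (h₁ : bracket (bracket x y) (bracket z y) = 1) (h₂ : bracket (bracket y z) (bracket x z) = 1)
    (h₃ : bracket (bracket z x) (bracket y x) = 1) :
    bracket (bracket x y) z = (bracket (bracket y z) x)⁻¹ * (bracket (bracket z x) y)⁻¹ := by
  have hw := hallWitt x y z
  rw [bracket_bracket_inv_right hc₁ h₁, bracket_bracket_inv_right hc₂ h₂,
    bracket_bracket_inv_right hc₃ h₃, conj_eq_self_of_mem_center (inv_mem hc₁),
    conj_eq_self_of_mem_center (inv_mem hc₂), conj_eq_self_of_mem_center (inv_mem hc₃)] at hw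
  rwa [mul_assoc, inv_mul_eq_one] at hw

end Commutators

section LowerCentralSeries

variable {G : Type*} [Group G]

lemma commutator_commutator_le_of_rotate {H₁ H₂ H₃ N : Subgroup G} [N.Normal]
    (h₁ : ⁅⁅H₂, H₃⁆, H₁⁆ ≤ N) (h₂ : ⁅⁅H₃, H₁⁆, H₂⁆ ≤ N) : ⁅⁅H₁, H₂⁆, H₃⁆ ≤ N := by
  have hquot : ∀ {A B C : Subgroup G}, ⁅⁅A, B⁆, C⁆ ≤ N ↔
      ⁅⁅A.map (QuotientGroup.mk' N), B.map (QuotientGroup.mk' N)⁆,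
        C.map (QuotientGroup.mk' N)⁆ = ⊥ := by
    intro A B C
    rw [← map_commutator, ← map_commutator, Subgroup.map_eq_bot_iff, QuotientGroup.ker_mk']
  exact hquot.mpr (commutator_commutator_eq_bot_of_rotate (hquot.mp h₁) (hquot.mp h₂))

lemma commutator_lowerCentralSeries_le : ∀ m n : ℕ,
    ⁅(γ m : Subgroup G), (γ n : Subgroup G)⁆ ≤ γ (m + n + 1)
  | m, 0 => le_rfl
  | m, n + 1 => by
    rw [commutator_comm, Subgroup.lowerCentralSeries_succ]
    apply commutator_commutator_le_of_rotate
    · rw [commutator_comm ⊤, ← Subgroup.lowerCentralSeries_succ, ← add_assoc, add_right_comm m]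
      exact commutator_lowerCentralSeries_le (m + 1) n
    · exact (commutator_mono (commutator_lowerCentralSeries_le m n) le_top).trans_eq rfl

lemma bracket_mem_lowerCentralSeries {m n : ℕ} {g h : G}
    (hg : g ∈ γ m) (hh : h ∈ γ n) : bracket g h ∈ γ (m + n + 1) := by
  rw [bracket_eq_commutatorElement]
  exact commutator_lowerCentralSeries_le m n
    (commutator_mem_commutator (inv_mem hg) (inv_mem hh))

lemma lowerCentralSeries_le_center {n : ℕ} (hG : (γ (n + 1) : Subgroup G) = ⊥) :
    γ n ≤ center G := by
  rw [← centralizer_univ, ← coe_top, ← commutator_eq_bot_iff_le_centralizer]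
  exact hG

lemma bracket_eq_one_of_lowerCentralSeries_eq_bot {k m n : ℕ}
    (hG : (γ k : Subgroup G) = ⊥) (hk : k ≤ m + n + 1) {g h : G}
    (hg : g ∈ γ m) (hh : h ∈ γ n) : bracket g h = 1 := by
  rw [← mem_bot, ← hG]
  exact Subgroup.lowerCentralSeries_antitone _ hk (bracket_mem_lowerCentralSeries hg hh)

lemma map_lowerCentralSeries_of_surjective {H : Type*} [Group H] {f : G →* H}
    (hf : Function.Surjective f) (n : ℕ) : (γ n).map f = γ n := by
  rw [map_lowerCentralSeries, map_top_of_surjective f hf]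

end LowerCentralSeries

end HallBasis

open HallBasis

namespace FC

variable {t : ℕ}

lemma one_le_wt : ∀ w : FC t, 1 ≤ w.wt
  | of _ => le_rfl
  | comm u _ => (one_le_wt u).trans (Nat.le_add_right _ _)

lemma finite_setOf_wt_le (t W : ℕ) : {w : FC t | w.wt ≤ W}.Finite := by
  induction W with
  | zero => exact Set.finite_empty.subset fun w (hw : w.wt ≤ 0) => absurd (one_le_wt w) (by omega)
  | succ W ih =>
    refine ((Set.finite_range (of : Fin t → FC t)).union (ih.image2 comm ih)).subset ?_
    rintro (i | ⟨u, v⟩) hw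
    · exact Or.inl ⟨i, rfl⟩
    · have hw : u.wt + v.wt ≤ W + 1 := hw
      have := one_le_wt u
      have := one_le_wt v
      exact Or.inr ⟨u, (by omega : u.wt ≤ W), v, (by omega : v.wt ≤ W), rfl⟩

variable {G H : Type*} [Group G] [Group H]

lemma eval_comm (x : Fin t → G) (u v : FC t) :
    (comm u v).eval x = bracket (u.eval x) (v.eval x) := rfl

lemma map_eval (f : G →* H) (x : Fin t → G) (w : FC t) : f (w.eval x) = w.eval (f ∘ x) := by
  induction w with
  | of i => rfl
  | comm u v ihu ihv => simp only [eval_comm, bracket, map_mul, map_inv, ihu, ihv]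

lemma eval_mem_lowerCentralSeries (x : Fin t → G) (w : FC t) : w.eval x ∈ γ (w.wt - 1) := by
  induction w with
  | of i => exact mem_top _
  | comm u v ihu ihv =>
    have := one_le_wt u
    have := one_le_wt v
    rw [eval_comm, wt, show u.wt + v.wt - 1 = u.wt - 1 + (v.wt - 1) + 1 by omega]
    exact bracket_mem_lowerCentralSeries ihu ihv

end FC

namespace HallBasis

section BasicCommutators

variable {G H : Type*} [Group G] [Group H] {t : ℕ} [LinearOrder (FC t)]

def basicCommutators (x : Fin t → G) (k : ℕ) : Set G :=
  {g | ∃ w : FC t, w.IsBasic ∧ w.wt = k ∧ w.eval x = g}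

lemma closure_basicCommutators_le (x : Fin t → G) (n : ℕ) :
    closure (basicCommutators x (n + 1)) ≤ γ n := by
  rw [closure_le]
  rintro _ ⟨w, -, hw, rfl⟩
  simpa [hw] using w.eval_mem_lowerCentralSeries x

lemma map_closure_basicCommutators (f : G →* H) (x : Fin t → G) (k : ℕ) :
    (closure (basicCommutators x k)).map f = closure (basicCommutators (f ∘ x) k) := by
  rw [MonoidHom.map_closure]
  congr 1
  ext g
  constructor
  · rintro ⟨_, ⟨w, hb, hw, rfl⟩, rfl⟩
    exact ⟨w, hb, hw, (w.map_eval f x).symm⟩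
  · rintro ⟨w, hb, hw, rfl⟩
    exact ⟨_, ⟨w, hb, hw, rfl⟩, w.map_eval f x⟩

end BasicCommutators

section ClassBound

variable {G : Type*} [Group G] {t : ℕ} {x : Fin t → G} {n : ℕ}

lemma bracket_eval_comm_eq (hG : (γ (n + 2) : Subgroup G) = ⊥) {u₁ u₂ v : FC t}
    (hw : u₁.wt + u₂.wt + v.wt = n + 2) :
    bracket ((FC.comm u₁ u₂).eval x) (v.eval x) =
      (bracket ((FC.comm u₂ v).eval x) (u₁.eval x))⁻¹ *
        bracket ((FC.comm u₁ v).eval x) (u₂.eval x) := by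
  have ev := FC.eval_mem_lowerCentralSeries x
  have hc : ∀ a b c : FC t, a.wt + b.wt + c.wt = n + 2 →
      bracket (bracket (a.eval x) (b.eval x)) (c.eval x) ∈ center G := by
    intro a b c habc
    refine lowerCentralSeries_le_center hG ?_
    have hmem :=
      bracket_mem_lowerCentralSeries (bracket_mem_lowerCentralSeries (ev a) (ev b)) (ev c)
    have := a.one_le_wt; have := b.one_le_wt; have := c.one_le_wt
    rwa [show a.wt - 1 + (b.wt - 1) + 1 + (c.wt - 1) + 1 = n + 1 by omega] at hmem
  have hz : ∀ a b c d : FC t, n + 3 ≤ a.wt + b.wt + c.wt + d.wt →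
      bracket (bracket (a.eval x) (b.eval x)) (bracket (c.eval x) (d.eval x)) = 1 := by
    intro a b c d habcd
    have := a.one_le_wt; have := b.one_le_wt; have := c.one_le_wt; have := d.one_le_wt
    exact bracket_eq_one_of_lowerCentralSeries_eq_bot hG (by omega)
      (bracket_mem_lowerCentralSeries (ev a) (ev b)) (bracket_mem_lowerCentralSeries (ev c) (ev d))
  have := u₁.one_le_wt; have := u₂.one_le_wt; have := v.one_le_wt
  have hswap : bracket (bracket (v.eval x) (u₁.eval x)) (u₂.eval x) =
      (bracket (bracket (u₁.eval x) (v.eval x)) (u₂.eval x))⁻¹ := by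
    rw [← inv_bracket (u₁.eval x), bracket_inv_left_of_mem_center (hc u₁ v u₂ (by omega))]
  rw [FC.eval_comm, FC.eval_comm, FC.eval_comm,
    jacobi (hc u₁ u₂ v hw) (hc u₂ v u₁ (by omega)) (hc v u₁ u₂ (by omega))
      (hz _ _ _ _ (by omega)) (hz _ _ _ _ (by omega)) (hz _ _ _ _ (by omega)), hswap, inv_inv]

variable [LinearOrder (FC t)]

lemma bracket_mem_of_forall_basic_left (hG : (γ (n + 2) : Subgroup G) = ⊥) {m q : ℕ}
    (hmq : m + q = n) (hm : γ m ≤ closure (basicCommutators x (m + 1)) ⊔ γ (m + 1))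
    {D : Subgroup G} {h : G} (hh : h ∈ γ q)
    (hD : ∀ w : FC t, w.IsBasic → w.wt = m + 1 → bracket (w.eval x) h ∈ D)
    {g : G} (hg : g ∈ γ m) : bracket g h ∈ D := by
  have hc : ∀ g' ∈ γ m, bracket g' h ∈ center G := fun g' hg' =>
    lowerCentralSeries_le_center hG (hmq ▸ bracket_mem_lowerCentralSeries hg' hh)
  have hB := closure_basicCommutators_le x m
  have hg' := hm hg
  rw [← SetLike.mem_coe, mul_normal, Set.mem_mul] at hg'
  obtain ⟨b, hb, z, hz, rfl⟩ := hg'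
  have hzh : bracket z h = 1 := bracket_eq_one_of_lowerCentralSeries_eq_bot hG (by omega) hz hh
  rw [bracket_mul_left_of_mem_center (hc b (hB hb)), hzh, mul_one]
  refine bracket_mem_of_mem_closure_left (fun g' hg' => hc g' (hB hg')) ?_ hb
  rintro _ ⟨w, hw, hwt, rfl⟩
  exact hD w hw hwt

lemma bracket_mem_of_forall_basic_right (hG : (γ (n + 2) : Subgroup G) = ⊥) {m q : ℕ}
    (hmq : m + q = n) (hq : γ q ≤ closure (basicCommutators x (q + 1)) ⊔ γ (q + 1))
    {D : Subgroup G} {g : G} (hg : g ∈ γ m)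
    (hD : ∀ w : FC t, w.IsBasic → w.wt = q + 1 → bracket g (w.eval x) ∈ D)
    {h : G} (hh : h ∈ γ q) : bracket g h ∈ D := by
  rw [← inv_bracket]
  refine inv_mem (bracket_mem_of_forall_basic_left hG (by omega) hq hg (fun w hw hwt => ?_) hh)
  rw [← inv_bracket]
  exact inv_mem (hD w hw hwt)

lemma bracket_eval_comm_mem (hG : (γ (n + 2) : Subgroup G) = ⊥)
    (hIH : ∀ m ≤ n, γ m ≤ closure (basicCommutators x (m + 1)) ⊔ γ (m + 1))
    {D : Subgroup G} {a b c : FC t} (hw : a.wt + b.wt + c.wt = n + 2)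
    (hD : ∀ w : FC t, w.IsBasic → w.wt = a.wt + b.wt → bracket (w.eval x) (c.eval x) ∈ D) :
    bracket ((FC.comm a b).eval x) (c.eval x) ∈ D := by
  have := a.one_le_wt; have := b.one_le_wt; have := c.one_le_wt
  exact bracket_mem_of_forall_basic_left hG (m := a.wt + b.wt - 1) (q := c.wt - 1) (by omega)
    (hIH _ (by omega)) (c.eval_mem_lowerCentralSeries x)
    (fun w hw hwt => hD w hw (by omega)) ((FC.comm a b).eval_mem_lowerCentralSeries x)

lemma bracket_eval_mem_of_lt (hord : ∀ u v : FC t, u.wt < v.wt → u < v)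
    (hG : (γ (n + 2) : Subgroup G) = ⊥)
    (hIH : ∀ m ≤ n, γ m ≤ closure (basicCommutators x (m + 1)) ⊔ γ (m + 1))
    {u v : FC t} (hu : u.IsBasic) (hv : v.IsBasic) (hvu : v < u) (hw : u.wt + v.wt = n + 2)
    (ih : ∀ u' v' : FC t, u'.IsBasic → v'.IsBasic → u'.wt + v'.wt = n + 2 → v < u' → v < v' →
      bracket (u'.eval x) (v'.eval x) ∈ closure (basicCommutators x (n + 2))) :
    bracket (u.eval x) (v.eval x) ∈ closure (basicCommutators x (n + 2)) := by
  cases u with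
  | of i => exact subset_closure ⟨.comm (.of i) v, ⟨trivial, hv, hvu, nofun⟩, hw, rfl⟩
  | comm u₁ u₂ =>
    obtain ⟨hu₁, hu₂, hlt, hcond⟩ := hu
    by_cases hle : u₂ ≤ v
    · refine subset_closure ⟨.comm (.comm u₁ u₂) v, ⟨⟨hu₁, hu₂, hlt, hcond⟩, hv, hvu, ?_⟩, hw, rfl⟩
      rintro _ _ ⟨⟩
      exact hle
    · have hvu₂ : v < u₂ := not_le.mp hle
      have hw' : u₁.wt + u₂.wt + v.wt = n + 2 := hw
      have := u₁.one_le_wt; have := u₂.one_le_wt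
      rw [bracket_eval_comm_eq hG hw']
      refine mul_mem (inv_mem (bracket_eval_comm_mem hG hIH (by omega) fun b hb hbw => ?_))
        (bracket_eval_comm_mem hG hIH (by omega) fun b hb hbw => ?_)
      · exact ih b u₁ hb hu₁ (by omega) (hord _ _ (by omega)) (hvu₂.trans hlt)
      · exact ih b u₂ hb hu₂ (by omega) (hord _ _ (by omega)) hvu₂

/-- The induction runs downwards on `min u v` over the finitely many formal commutators of
weight at most `n + 1`. -/
lemma bracket_eval_basic_mem (hord : ∀ u v : FC t, u.wt < v.wt → u < v)
    (hG : (γ (n + 2) : Subgroup G) = ⊥)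
    (hIH : ∀ m ≤ n, γ m ≤ closure (basicCommutators x (m + 1)) ⊔ γ (m + 1))
    {u v : FC t} (hu : u.IsBasic) (hv : v.IsBasic) (hw : u.wt + v.wt = n + 2) :
    bracket (u.eval x) (v.eval x) ∈ closure (basicCommutators x (n + 2)) := by
  have min_mem : ∀ u v : FC t, u.wt + v.wt = n + 2 → (min u v).wt ≤ n + 1 := by
    intro u v huv
    have := u.one_le_wt; have := v.one_le_wt
    rcases min_choice u v with h | h <;> rw [h] <;> omega
  refine ((FC.finite_setOf_wt_le t (n + 1)).wellFoundedOn (r := (· > ·))).induction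
    (P := fun k => ∀ u v : FC t, u.IsBasic → v.IsBasic → u.wt + v.wt = n + 2 → min u v = k →
      bracket (u.eval x) (v.eval x) ∈ closure (basicCommutators x (n + 2)))
    (min_mem u v hw) ?_ u v hu hv hw rfl
  intro k _ ih u v hu hv hw hk
  have oriented : ∀ u v : FC t, u.IsBasic → v.IsBasic → u.wt + v.wt = n + 2 → v < u →
      min u v = k → bracket (u.eval x) (v.eval x) ∈ closure (basicCommutators x (n + 2)) := by
    intro u v hu hv hw hvu hk
    rw [min_eq_right hvu.le] at hk
    subst hk
    exact bracket_eval_mem_of_lt hord hG hIH hu hv hvu hw fun u' v' hu' hv' hw' h₁ h₂ =>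
      ih _ (min_mem u' v' hw') (lt_min h₁ h₂) u' v' hu' hv' hw' rfl
  rcases lt_trichotomy u v with h | rfl | h
  · rw [← inv_bracket]
    exact inv_mem (oriented v u hv hu (by omega) h (min_comm u v ▸ hk))
  · rw [bracket_self]
    exact one_mem _
  · exact oriented u v hu hv hw h hk

lemma lowerCentralSeries_succ_le_closure_basicCommutators
    (hord : ∀ u v : FC t, u.wt < v.wt → u < v) (hG : (γ (n + 2) : Subgroup G) = ⊥)
    (hIH : ∀ m ≤ n, γ m ≤ closure (basicCommutators x (m + 1)) ⊔ γ (m + 1)) :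
    γ (n + 1) ≤ closure (basicCommutators x (n + 2)) := by
  rw [Subgroup.lowerCentralSeries_succ, commutator_le]
  intro g hg h _
  rw [show ⁅g, h⁆ = bracket g⁻¹ h⁻¹ by rw [bracket_eq_commutatorElement, inv_inv, inv_inv]]
  refine bracket_mem_of_forall_basic_left hG (m := n) (q := 0) rfl (hIH n le_rfl)
    (mem_top h⁻¹) (fun b hb hbw => ?_) (inv_mem hg)
  have hbn : b.eval x ∈ γ n := by simpa [hbw] using b.eval_mem_lowerCentralSeries x
  exact bracket_mem_of_forall_basic_right hG (m := n) (q := 0) rfl (hIH 0 n.zero_le) hbn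
    (fun b' hb' hb'w => bracket_eval_basic_mem hord hG hIH hb hb' (by omega)) (mem_top h⁻¹)

end ClassBound

section Descent

variable {G : Type*} [Group G] {t : ℕ} [LinearOrder (FC t)]

lemma lowerCentralSeries_le_closure_basicCommutators_sup_of_surjective {H : Type*} [Group H]
    {f : G →* H} (hf : Function.Surjective f) {x : Fin t → G} {m k : ℕ}
    (h : γ m ≤ closure (basicCommutators x k) ⊔ γ (m + 1)) :
    γ m ≤ closure (basicCommutators (f ∘ x) k) ⊔ γ (m + 1) := by
  rw [← map_lowerCentralSeries_of_surjective hf, ← map_lowerCentralSeries_of_surjective hf,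
    ← map_closure_basicCommutators, ← Subgroup.map_sup]
  exact map_mono h

theorem lowerCentralSeries_eq_closure_basicCommutators_sup {x : Fin t → G}
    (hx : closure (Set.range x) = ⊤) (hord : ∀ u v : FC t, u.wt < v.wt → u < v) (n : ℕ) :
    γ n = closure (basicCommutators x (n + 1)) ⊔ γ (n + 1) := by
  refine le_antisymm ?_ (sup_le (closure_basicCommutators_le x n)
    (Subgroup.lowerCentralSeries_antitone _ n.le_succ))
  induction n using Nat.strong_induction_on with
  | _ n ih =>
  cases n with
  | zero =>
    calc γ 0 = closure (Set.range x) := hx.symm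
      _ ≤ closure (basicCommutators x 1) :=
        closure_mono (by rintro _ ⟨i, rfl⟩; exact ⟨.of i, trivial, rfl, rfl⟩)
      _ ≤ _ := le_sup_left
  | succ n =>
    let π := QuotientGroup.mk' (γ (n + 2) : Subgroup G)
    have hπ : Function.Surjective π := QuotientGroup.mk'_surjective _
    have hQ : (γ (n + 2) : Subgroup (G ⧸ γ (n + 2))) = ⊥ := by
      rw [← map_lowerCentralSeries_of_surjective hπ, Subgroup.map_eq_bot_iff,
        QuotientGroup.ker_mk']
    have hbasic := lowerCentralSeries_succ_le_closure_basicCommutators hord hQ fun m hm =>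
      lowerCentralSeries_le_closure_basicCommutators_sup_of_surjective hπ (ih m (by omega))
    calc γ (n + 1) ≤ ((γ (n + 1)).map π).comap π := le_comap_map _ _
      _ ≤ ((closure (basicCommutators x (n + 2))).map π).comap π := by
        rw [map_lowerCentralSeries_of_surjective hπ, map_closure_basicCommutators]
        exact comap_mono hbasic
      _ = closure (basicCommutators x (n + 2)) ⊔ γ (n + 2) := by
        rw [comap_map_eq, QuotientGroup.ker_mk']

end Descent

end HallBasis

/-- P. Hall's basis theorem: if `F` is free on `x₁, …, x_t` (the free product of
`t` infinite cyclic groups), then `γ_{c+1}(F) = B·γ_{c+2}(F)`, where `B` is the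
subgroup generated by the basic commutators of weight `c+1` in the generators
(relative to any weight-compatible linear order on formal commutators). Here
`γ_n(F) = lowerCentralSeries F (n-1)`, and the product `B·γ_{c+2}(F)` is the
join `B ⊔ γ_{c+2}(F)` since `γ_{c+2}(F)` is normal. -/
theorem hall_basis_theorem (t c : ℕ) [LinearOrder (FC t)]
    (hord : ∀ u v : FC t, u.wt < v.wt → u < v) :
    (⊤ : Subgroup (FreeGroup (Fin t))).lowerCentralSeries c =
      Subgroup.closure
          {g : FreeGroup (Fin t) |
            ∃ w : FC t, w.IsBasic ∧ w.wt = c + 1 ∧ FC.eval FreeGroup.of w = g}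
        ⊔ (⊤ : Subgroup (FreeGroup (Fin t))).lowerCentralSeries (c + 1) :=
  HallBasis.lowerCentralSeries_eq_closure_basicCommutators_sup (FreeGroup.closure_range_of _) hord c
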